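/- arXiv:2006.14461 — 9 statements merged into one kernel-verified Lean document; each statement's English description precedes it below -/
import Mathlib

section
/- Let κ > 0 and σ ∈ {−1, 1}. Let I ⊆ ℝ be an open interval and s : I → ℝ a twice differentiable function satisfying s′(ξ)² + cosh²(s(ξ))/(κ² + 1) = 1 and s′(ξ) ≠ 0 for every ξ ∈ I. Define ψ : I → ℝ by ψ(ξ) = (1+σ)·arcsin(cosh(s(ξ))/√(κ²+1)) + (1−σ)·arccos(cosh(s(ξ))/√(κ²+1)). Then ψ is twice differentiable and ψ″(ξ) = σ·sin(ψ(ξ)) for every ξ ∈ I; equivalently, the function φ(u,v) := ψ(u+v) satisfies the sine-Gordon equation ∂²φ/∂u∂v = σ·sin(φ). -/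
/-!
Since `arccos = π/2 - arcsin`, we have `ψ = 2σθ + (1-σ)π/2` with `θ = arcsin (cosh s / c)`,
`c = √(κ²+1)`, and for `σ = ±1` also `sin ψ = sin 2θ`. The constraint says `cos θ = |s'|`, so the
chain rule gives `θ' = sinh s / c · sign s'`, where the sign of `s'` is locally constant.
Differentiating once more, `θ'' = sin θ · |s'| = sin θ cos θ = ½ sin 2θ`, hence
`ψ'' = σ sin 2θ = σ sin ψ`.
-/

open Real Filter Topology

lemma one_add_mul_arcsin_add_one_sub_mul_arccos (σ x : ℝ) :
    (1 + σ) * arcsin x + (1 - σ) * arccos x = 2 * σ * arcsin x + (1 - σ) * (π / 2) := by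
  rw [arccos_eq_pi_div_two_sub_arcsin]
  ring

lemma sin_two_mul_add_one_sub_mul_pi_div_two {σ : ℝ} (hσ : σ = -1 ∨ σ = 1) (y : ℝ) :
    sin (2 * σ * y + (1 - σ) * (π / 2)) = sin (2 * y) := by
  rcases hσ with rfl | rfl
  · rw [show 2 * -1 * y + (1 - -1) * (π / 2) = π - 2 * y by ring, sin_pi_sub]
  · norm_num

lemma sin_two_mul_arcsin {x : ℝ} (h₁ : -1 ≤ x) (h₂ : x ≤ 1) :
    sin (2 * arcsin x) = 2 * x * √(1 - x ^ 2) := by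
  rw [sin_two_mul, sin_arcsin h₁ h₂, cos_arcsin, mul_assoc]

lemma ContinuousAt.eventually_div_abs_eq {f : ℝ → ℝ} {x : ℝ} (hf : ContinuousAt f x)
    (hx : f x ≠ 0) : ∀ᶠ y in 𝓝 x, f y / |f y| = f x / |f x| := by
  rcases hx.lt_or_gt with hneg | hpos
  · filter_upwards [hf.eventually (gt_mem_nhds hneg)] with y hy
    rw [abs_of_neg hy, abs_of_neg hneg, div_neg_self hy.ne, div_neg_self hneg.ne]
  · filter_upwards [hf.eventually (lt_mem_nhds hpos)] with y hy
    rw [abs_of_pos hy, abs_of_pos hpos, div_self hy.ne', div_self hpos.ne']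

lemma sqrt_one_sub_sq_eq_abs_of_sq_add_sq {a b : ℝ} (h : a ^ 2 + b ^ 2 = 1) :
    √(1 - b ^ 2) = |a| := by
  rw [← sqrt_sq_eq_abs, ← h, add_sub_cancel_right]

section Profile

variable {s : ℝ → ℝ} {c : ℝ}

lemma hasDerivAt_arcsin_cosh_div {x : ℝ} (hs : DifferentiableAt ℝ s x)
    (heq : deriv s x ^ 2 + (cosh (s x) / c) ^ 2 = 1) (hne : deriv s x ≠ 0) :
    HasDerivAt (fun y => arcsin (cosh (s y) / c))
      (sinh (s x) / c * (deriv s x / |deriv s x|)) x := by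
  have hlt : (cosh (s x) / c) ^ 2 < 1 := by
    have : 0 < deriv s x ^ 2 := by positivity
    linarith
  have hg : HasDerivAt (fun y => cosh (s y) / c) (sinh (s x) * deriv s x / c) x :=
    hs.hasDerivAt.cosh.div_const c
  refine ((hasDerivAt_arcsin (by nlinarith) (by nlinarith)).comp x hg).congr_deriv ?_
  rw [sqrt_one_sub_sq_eq_abs_of_sq_add_sq heq]
  ring

lemma hasDerivAt_deriv_arcsin_cosh_div {ξ : ℝ}
    (hs : ∀ᶠ x in 𝓝 ξ, DifferentiableAt ℝ s x ∧ deriv s x ^ 2 + (cosh (s x) / c) ^ 2 = 1)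
    (hs' : DifferentiableAt ℝ (deriv s) ξ) (hne : deriv s ξ ≠ 0) :
    HasDerivAt (deriv fun y => arcsin (cosh (s y) / c))
      (sin (2 * arcsin (cosh (s ξ) / c)) / 2) ξ := by
  set ε := deriv s ξ / |deriv s ξ|
  have hθ' : deriv (fun y => arcsin (cosh (s y) / c)) =ᶠ[𝓝 ξ] fun x => sinh (s x) / c * ε := by
    filter_upwards [hs, hs'.continuousAt.eventually_ne hne,
      hs'.continuousAt.eventually_div_abs_eq hne] with x ⟨hsx, heqx⟩ hnex hεx
    rw [(hasDerivAt_arcsin_cosh_div hsx heqx hnex).deriv, hεx]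
  obtain ⟨hsξ, heqξ⟩ := hs.self_of_nhds
  refine (((hsξ.hasDerivAt.sinh.div_const c).mul_const ε).congr_of_eventuallyEq hθ').congr_deriv ?_
  rw [sin_two_mul_arcsin (by nlinarith) (by nlinarith),
    sqrt_one_sub_sq_eq_abs_of_sq_add_sq heqξ]
  have hsε : deriv s ξ * ε = |deriv s ξ| := by
    rw [mul_div_assoc', ← sq, ← sq_abs, sq, mul_self_div_self]
  linear_combination cosh (s ξ) / c * hsε

end Profile

theorem sineGordon_minding_bobbin_general (κ σ a b : ℝ) (hσ : σ = -1 ∨ σ = 1)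
    (s ψ : ℝ → ℝ)
    (hs : ∀ ξ ∈ Set.Ioo a b, DifferentiableAt ℝ s ξ)
    (hs' : ∀ ξ ∈ Set.Ioo a b, DifferentiableAt ℝ (deriv s) ξ)
    (heq : ∀ ξ ∈ Set.Ioo a b,
      (deriv s ξ) ^ 2 + (Real.cosh (s ξ)) ^ 2 / (κ ^ 2 + 1) = 1)
    (hne : ∀ ξ ∈ Set.Ioo a b, deriv s ξ ≠ 0)
    (hψ : ∀ ξ, ψ ξ =
      (1 + σ) * Real.arcsin (Real.cosh (s ξ) / Real.sqrt (κ ^ 2 + 1)) +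
      (1 - σ) * Real.arccos (Real.cosh (s ξ) / Real.sqrt (κ ^ 2 + 1))) :
    ∀ ξ ∈ Set.Ioo a b, DifferentiableAt ℝ ψ ξ ∧ DifferentiableAt ℝ (deriv ψ) ξ ∧
      deriv (deriv ψ) ξ = σ * Real.sin (ψ ξ) := by
  intro ξ hξ
  set c := √(κ ^ 2 + 1)
  set θ : ℝ → ℝ := fun x => arcsin (cosh (s x) / c)
  have hprofile : ∀ x ∈ Set.Ioo a b,
      DifferentiableAt ℝ s x ∧ deriv s x ^ 2 + (cosh (s x) / c) ^ 2 = 1 :=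
    fun x hx => ⟨hs x hx, by rw [div_pow, sq_sqrt (by positivity)]; exact heq x hx⟩
  have hψθ : ψ = fun x => 2 * σ * θ x + (1 - σ) * (π / 2) :=
    funext fun x => by rw [hψ, one_add_mul_arcsin_add_one_sub_mul_arccos]
  have hψ' : deriv ψ = fun x => 2 * σ * deriv θ x := by
    rw [hψθ, deriv_add_const', deriv_const_mul_field']
  have hθ' := hasDerivAt_arcsin_cosh_div (hprofile ξ hξ).1 (hprofile ξ hξ).2 (hne ξ hξ)
  have hθ'' := hasDerivAt_deriv_arcsin_cosh_div
    (eventually_of_mem (isOpen_Ioo.mem_nhds hξ) hprofile) (hs' ξ hξ) (hne ξ hξ)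
  have hψ'' : HasDerivAt (deriv ψ) (2 * σ * (sin (2 * θ ξ) / 2)) ξ :=
    hψ' ▸ hθ''.const_mul (2 * σ)
  refine ⟨hψθ ▸ (hθ'.differentiableAt.const_mul _).add_const _, hψ''.differentiableAt, ?_⟩
  rw [hψ''.deriv, hψθ, sin_two_mul_add_one_sub_mul_pi_div_two hσ]
  ring

/-- Sine-Gordon lemma for Minding's bobbin: if `s` is twice differentiable on the open
interval `(a,b)` with `s′(ξ)² + cosh²(s(ξ))/(κ²+1) = 1` and `s′(ξ) ≠ 0`, then
`ψ(ξ) = (1+σ)·arcsin(cosh(s ξ)/√(κ²+1)) + (1−σ)·arccos(cosh(s ξ)/√(κ²+1))`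
is twice differentiable and satisfies `ψ″ = σ·sin ψ` on `(a,b)`;
equivalently `φ(u,v) = ψ(u+v)` solves the sine-Gordon equation `∂²φ/∂u∂v = σ sin φ`. -/
theorem sineGordon_minding_bobbin (κ σ a b : ℝ) (hκ : 0 < κ) (hσ : σ = -1 ∨ σ = 1)
    (s ψ : ℝ → ℝ)
    (hs : ∀ ξ ∈ Set.Ioo a b, DifferentiableAt ℝ s ξ)
    (hs' : ∀ ξ ∈ Set.Ioo a b, DifferentiableAt ℝ (deriv s) ξ)
    (heq : ∀ ξ ∈ Set.Ioo a b,
      (deriv s ξ) ^ 2 + (Real.cosh (s ξ)) ^ 2 / (κ ^ 2 + 1) = 1)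
    (hne : ∀ ξ ∈ Set.Ioo a b, deriv s ξ ≠ 0)
    (hψ : ∀ ξ, ψ ξ =
      (1 + σ) * Real.arcsin (Real.cosh (s ξ) / Real.sqrt (κ ^ 2 + 1)) +
      (1 - σ) * Real.arccos (Real.cosh (s ξ) / Real.sqrt (κ ^ 2 + 1))) :
    ∀ ξ ∈ Set.Ioo a b, DifferentiableAt ℝ ψ ξ ∧ DifferentiableAt ℝ (deriv ψ) ξ ∧
      deriv (deriv ψ) ξ = σ * Real.sin (ψ ξ) :=
  sineGordon_minding_bobbin_general κ σ a b hσ s ψ hs hs' heq hne hψ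
end

section
/- Let κ > 0 and let s : I → ℝ be twice differentiable on an open interval I with s′(ξ)² = (κ² − sinh²(s(ξ)))/(κ²+1) and s″(ξ) = −sinh(s(ξ))cosh(s(ξ))/(κ²+1) for all ξ ∈ I. Define z : I → ℝ by requiring z′(ξ) = (κ² − sinh²(s(ξ)))/(κ·√(κ²+1)). If ξ_c ∈ I satisfies sinh(s(ξ_c)) = κ, then z′(ξ_c) = 0, z″(ξ_c) = 0, and z‴(ξ_c) = 2κ/√(κ²+1) > 0. -/
open Real Set

/-!
At the turning point `sinh (s ξc) = κ` the first-order equation forces `s' = 0`, so `z'` vanishes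
there to second order: `z'' = -2 sinh s cosh s s' / (κ√(κ²+1))` vanishes as well, and in `z'''`
only the term carrying `s''` survives. The second-order equation and `cosh² s = κ² + 1` evaluate it
to `2κ/√(κ²+1)`.
-/

theorem HasDerivAt.mul_of_right_eq_zero {𝕜 : Type*} [NontriviallyNormedField 𝕜] {u v : 𝕜 → 𝕜}
    {u' v' x : 𝕜} (hu : HasDerivAt u u' x) (hv : HasDerivAt v v' x) (hvx : v x = 0) :
    HasDerivAt (fun y => u y * v y) (u x * v') x := by
  simpa [hvx] using hu.fun_mul hv

theorem HasDerivAt.sinh_sq {f : ℝ → ℝ} {f' x : ℝ} (hf : HasDerivAt f f' x) :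
    HasDerivAt (fun y => Real.sinh (f y) ^ 2) (2 * Real.sinh (f x) * Real.cosh (f x) * f') x := by
  refine (hf.sinh.fun_pow 2).congr_deriv ?_
  ring

/-- Cuspidal edge of Minding's bobbin: at a turning point `ξ_c` where `sinh(s(ξ_c)) = κ`,
the height function `z` (with `z′ = (κ² − sinh²(s))/(κ√(κ²+1))`) has
`z′(ξ_c) = 0`, `z″(ξ_c) = 0` and `z‴(ξ_c) = 2κ/√(κ²+1) > 0`. -/
theorem bobbin_cusp (κ a b : ℝ) (hκ : 0 < κ) (s z : ℝ → ℝ)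
    (hs : ∀ ξ ∈ Set.Ioo a b, DifferentiableAt ℝ s ξ)
    (hs' : ∀ ξ ∈ Set.Ioo a b, DifferentiableAt ℝ (deriv s) ξ)
    (h1 : ∀ ξ ∈ Set.Ioo a b,
      (deriv s ξ) ^ 2 = (κ ^ 2 - (Real.sinh (s ξ)) ^ 2) / (κ ^ 2 + 1))
    (h2 : ∀ ξ ∈ Set.Ioo a b,
      deriv (deriv s) ξ = -(Real.sinh (s ξ) * Real.cosh (s ξ)) / (κ ^ 2 + 1))
    (hz : ∀ ξ ∈ Set.Ioo a b,
      HasDerivAt z ((κ ^ 2 - (Real.sinh (s ξ)) ^ 2) / (κ * Real.sqrt (κ ^ 2 + 1))) ξ)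
    (ξc : ℝ) (hξc : ξc ∈ Set.Ioo a b) (hc : Real.sinh (s ξc) = κ) :
    deriv z ξc = 0 ∧ deriv (deriv z) ξc = 0 ∧
      deriv (deriv (deriv z)) ξc = 2 * κ / Real.sqrt (κ ^ 2 + 1) ∧
      0 < 2 * κ / Real.sqrt (κ ^ 2 + 1) := by
  set C := κ * √(κ ^ 2 + 1)
  set G : ℝ → ℝ := fun ξ => -2 / C * (sinh (s ξ) * cosh (s ξ) * deriv s ξ)
  have hz1 : EqOn (deriv z) (fun ξ => (κ ^ 2 - sinh (s ξ) ^ 2) / C) (Ioo a b) :=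
    fun ξ hξ => (hz ξ hξ).deriv
  have hz2 : EqOn (deriv (deriv z)) G (Ioo a b) := by
    intro ξ hξ
    rw [hz1.deriv isOpen_Ioo hξ]
    have hF := ((HasDerivAt.sinh_sq (hs ξ hξ).hasDerivAt).const_sub (κ ^ 2)).div_const C
    rw [hF.deriv]
    ring
  have hs0 : deriv s ξc = 0 := by simpa [hc] using h1 ξc hξc
  have hcosh : cosh (s ξc) ^ 2 = κ ^ 2 + 1 := by rw [cosh_sq', hc]; ring
  have hG : HasDerivAt G (2 * κ / √(κ ^ 2 + 1)) ξc := by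
    have hsξ := (hs ξc hξc).hasDerivAt
    refine (((hsξ.sinh.fun_mul hsξ.cosh).mul_of_right_eq_zero (hs' ξc hξc).hasDerivAt
      hs0).const_mul (-2 / C)).congr_deriv ?_
    have : 0 < √(κ ^ 2 + 1) := by positivity
    rw [h2 ξc hξc, hc]
    simp only [C]
    field_simp
    linear_combination hcosh
  refine ⟨by simp [hz1 hξc, hc], by simp [hz2 hξc, G, hs0], ?_, by positivity⟩
  exact (hz2.deriv isOpen_Ioo hξc).trans hG.deriv
end

section
/- Let Z > 0 and let ψ : [0,Z] → ℝ be continuous on [0,Z], twice continuously differentiable on (0,Z], and satisfy ψ″(z) + ψ′(z)/z = sin(ψ(z)) for all z ∈ (0,Z], with z·ψ′(z) → 0 as z → 0⁺. If 0 < ψ(z) < π for all z ∈ [0,Z], then z·ψ′(z) = ∫₀ᶻ ξ·sin(ψ(ξ)) dξ for all z ∈ (0,Z]; in particular ψ′(z) > 0 for all z ∈ (0,Z], so ψ is strictly increasing on [0,Z]. -/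
/-!
Multiplying `ψ″ + ψ′/z = sin ψ` by `z` gives `(z ψ′)′ = z sin ψ`. Integrating from `0`, where
`z ψ′` vanishes in the limit, yields `z ψ′(z) = ∫₀ᶻ ξ sin ψ(ξ) dξ`, and the integrand is positive
because `ψ` stays in `(0, π)`.
-/

open intervalIntegral Set Filter Topology MeasureTheory

theorem HasDerivAt.id_mul_of_ne_zero {g : ℝ → ℝ} {g' x : ℝ} (hg : HasDerivAt g g' x)
    (hx : x ≠ 0) : HasDerivAt (fun t => t * g t) (x * (g' + g x / x)) x :=
  ((hasDerivAt_id' x).mul hg).congr_deriv (by field_simp; ring)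

theorem mul_deriv_eq_integral_of_deriv_deriv_add_div_eq {u f : ℝ → ℝ} {z : ℝ} (hz : 0 < z)
    (hd : ∀ x ∈ Ioc 0 z, DifferentiableAt ℝ (deriv u) x)
    (heq : ∀ x ∈ Ioc 0 z, deriv (deriv u) x + deriv u x / x = f x)
    (hf : IntervalIntegrable (fun x => x * f x) volume 0 z)
    (hlim : Tendsto (fun x => x * deriv u x) (𝓝[>] 0) (𝓝 0)) :
    z * deriv u z = ∫ x in 0..z, x * f x := by
  have hderiv : ∀ x ∈ Ioc 0 z, HasDerivAt (fun t => t * deriv u t) (x * f x) x := fun x hx =>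
    heq x hx ▸ (hd x hx).hasDerivAt.id_mul_of_ne_zero hx.1.ne'
  have hright : Tendsto (fun x => x * deriv u x) (𝓝[<] z) (𝓝 (z * deriv u z)) :=
    (hderiv z (right_mem_Ioc.2 hz)).continuousAt.tendsto.mono_left nhdsWithin_le_nhds
  rw [integral_eq_sub_of_hasDerivAt_of_tendsto hz
    (fun x hx => hderiv x (Ioo_subset_Ioc_self hx)) hf hlim hright, sub_zero]

theorem painleveIII_strictMono_general (Z : ℝ) (ψ : ℝ → ℝ)
    (hcont : ContinuousOn ψ (Set.Icc 0 Z))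
    (hd2 : ∀ z ∈ Set.Ioc 0 Z, DifferentiableAt ℝ (deriv ψ) z)
    (heq : ∀ z ∈ Set.Ioc 0 Z, deriv (deriv ψ) z + deriv ψ z / z = Real.sin (ψ z))
    (hlim : Filter.Tendsto (fun z => z * deriv ψ z)
      (nhdsWithin 0 (Set.Ioi 0)) (nhds 0))
    (hrange : ∀ z ∈ Set.Icc 0 Z, 0 < ψ z ∧ ψ z < Real.pi) :
    (∀ z ∈ Set.Ioc 0 Z,
        z * deriv ψ z = ∫ ξ in (0 : ℝ)..z, ξ * Real.sin (ψ ξ)) ∧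
    (∀ z ∈ Set.Ioc 0 Z, 0 < deriv ψ z) ∧
    StrictMonoOn ψ (Set.Icc 0 Z) := by
  have hsub : ∀ z ∈ Ioc 0 Z, Ioc 0 z ⊆ Ioc 0 Z := fun z hz => Ioc_subset_Ioc_right hz.2
  have hintegrable :
      ∀ z ∈ Ioc 0 Z, IntervalIntegrable (fun ξ => ξ * Real.sin (ψ ξ)) volume 0 z :=
    fun z hz => ContinuousOn.intervalIntegrable <| continuousOn_id.mul <|
      Real.continuous_sin.comp_continuousOn <| hcont.mono <| by
        rw [uIcc_of_le hz.1.le]; exact Icc_subset_Icc_right hz.2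
  have hidentity : ∀ z ∈ Ioc 0 Z, z * deriv ψ z = ∫ ξ in (0 : ℝ)..z, ξ * Real.sin (ψ ξ) :=
    fun z hz => mul_deriv_eq_integral_of_deriv_deriv_add_div_eq hz.1
      (fun x hx => hd2 x (hsub z hz hx)) (fun x hx => heq x (hsub z hz hx))
      (hintegrable z hz) hlim
  have hpos : ∀ z ∈ Ioc 0 Z, 0 < deriv ψ z := by
    intro z hz
    have hsin : ∀ x ∈ Ioo 0 z, 0 < Real.sin (ψ x) := fun x hx =>
      have hψx := hrange x ⟨hx.1.le, hx.2.le.trans hz.2⟩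
      Real.sin_pos_of_pos_of_lt_pi hψx.1 hψx.2
    have hmul : 0 < z * deriv ψ z := hidentity z hz ▸
      intervalIntegral_pos_of_pos_on (hintegrable z hz) (fun x hx => mul_pos hx.1 (hsin x hx)) hz.1
    exact pos_of_mul_pos_right hmul hz.1.le
  refine ⟨hidentity, hpos, strictMonoOn_of_deriv_pos (convex_Icc 0 Z) hcont fun x hx => ?_⟩
  rw [interior_Icc] at hx
  exact hpos x (Ioo_subset_Ioc_self hx)

/-- Monotonicity for Painlevé III in trigonometric form: if `ψ` is continuous on `[0,Z]`,
twice continuously differentiable on `(0,Z]`, solves `ψ″ + ψ′/z = sin ψ` there with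
`z·ψ′(z) → 0` as `z → 0⁺`, and `0 < ψ < π` on `[0,Z]`, then
`z·ψ′(z) = ∫₀ᶻ ξ·sin(ψ(ξ)) dξ` on `(0,Z]`; in particular `ψ′ > 0` on `(0,Z]` and
`ψ` is strictly increasing on `[0,Z]`. -/
theorem painleveIII_strictMono (Z : ℝ) (hZ : 0 < Z) (ψ : ℝ → ℝ)
    (hcont : ContinuousOn ψ (Set.Icc 0 Z))
    (hd1 : ∀ z ∈ Set.Ioc 0 Z, DifferentiableAt ℝ ψ z)
    (hd2 : ∀ z ∈ Set.Ioc 0 Z, DifferentiableAt ℝ (deriv ψ) z)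
    (hd2c : ContinuousOn (deriv (deriv ψ)) (Set.Ioc 0 Z))
    (heq : ∀ z ∈ Set.Ioc 0 Z, deriv (deriv ψ) z + deriv ψ z / z = Real.sin (ψ z))
    (hlim : Filter.Tendsto (fun z => z * deriv ψ z)
      (nhdsWithin 0 (Set.Ioi 0)) (nhds 0))
    (hrange : ∀ z ∈ Set.Icc 0 Z, 0 < ψ z ∧ ψ z < Real.pi) :
    (∀ z ∈ Set.Ioc 0 Z,
        z * deriv ψ z = ∫ ξ in (0 : ℝ)..z, ξ * Real.sin (ψ ξ)) ∧
    (∀ z ∈ Set.Ioc 0 Z, 0 < deriv ψ z) ∧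
    StrictMonoOn ψ (Set.Icc 0 Z) :=
  painleveIII_strictMono_general Z ψ hcont hd2 heq hlim hrange
end

section
/- Let 0 < φ₀ ≤ φ* < π, set C = √(sin(φ*)/φ*), and let Z > 0. Let ψ, u, w : [0,Z] → ℝ be continuous on [0,Z], twice continuously differentiable on (0,Z], with ψ(0) = u(0) = w(0) = φ₀, and with z·ψ′(z), z·u′(z), z·w′(z) all tending to 0 as z → 0⁺. Suppose that for z ∈ (0,Z]: ψ″(z) + ψ′(z)/z = sin(ψ(z)), u″(z) + u′(z)/z = C²·u(z), and w″(z) + w′(z)/z = w(z). If 0 < ψ(z) ≤ φ* for all z ∈ [0,Z], then u(z) ≤ ψ(z) ≤ w(z) for all z ∈ [0,Z]. -/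
/-!
For solutions of radial equations `Δp = A`, `Δq = B` with `Δf = f″ + f′/z`, the weighted
Wronskian `W = z (p′q − pq′)` satisfies `W′ = z (A q − p B)` and vanishes at `0⁺` because
`z p′, z q′ → 0`. If `A q ≤ p B` and `q > 0`, then `W ≤ 0`, so `p / q` decreases from its initial
value `1` and `p ≤ q`. For `u ≤ ψ` the needed inequality is `C² ψ ≤ sin ψ`, i.e. that `sin x / x`
decreases on `(0, π]`; for `ψ ≤ w` it is `sin ψ ≤ ψ`. The comparison functions are positive,
since `z v′` starts at `0` and increases as long as `v > 0`.
-/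

open Set Filter Topology Real

theorem Real.antitoneOn_sin_div : AntitoneOn (fun x => sin x / x) (Ioc 0 π) := by
  have h := strictConcaveOn_sin_Icc.concaveOn.antitoneOn_slope_gt (x := 0) ⟨le_rfl, pi_pos.le⟩
  intro x hx y hy hxy
  have := h ⟨Ioc_subset_Icc_self hx, hx.1⟩ ⟨Ioc_subset_Icc_self hy, hy.1⟩ hxy
  simpa [slope_def_field] using this

theorem le_of_tendsto_nhdsGT_of_hasDerivAt_nonpos {f f' : ℝ → ℝ} {a b L : ℝ}
    (hf : ∀ x ∈ Ioc a b, HasDerivAt f (f' x) x) (hf' : ∀ x ∈ Ioc a b, f' x ≤ 0)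
    (hlim : Tendsto f (𝓝[>] a) (𝓝 L)) : ∀ x ∈ Ioc a b, f x ≤ L := by
  have hanti : AntitoneOn f (Ioc a b) :=
    antitoneOn_of_hasDerivWithinAt_nonpos (convex_Ioc a b)
      (fun x hx => (hf x hx).continuousAt.continuousWithinAt)
      (fun x hx => (hf x (interior_subset hx)).hasDerivWithinAt)
      (fun x hx => hf' x (interior_subset hx))
  intro x hx
  refine ge_of_tendsto hlim ?_
  filter_upwards [Ioo_mem_nhdsGT hx.1] with t ht
  exact hanti ⟨ht.1, ht.2.le.trans hx.2⟩ hx ht.2.le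

theorem ge_of_tendsto_nhdsGT_of_hasDerivAt_nonneg {f f' : ℝ → ℝ} {a b L : ℝ}
    (hf : ∀ x ∈ Ioc a b, HasDerivAt f (f' x) x) (hf' : ∀ x ∈ Ioc a b, 0 ≤ f' x)
    (hlim : Tendsto f (𝓝[>] a) (𝓝 L)) : ∀ x ∈ Ioc a b, L ≤ f x := by
  intro x hx
  simpa using le_of_tendsto_nhdsGT_of_hasDerivAt_nonpos (fun x hx => (hf x hx).neg)
    (fun x hx => neg_nonpos.2 (hf' x hx)) hlim.neg x hx

theorem ContinuousOn.forall_Icc_pos_of_forall_Ico_pos {v : ℝ → ℝ} {a b : ℝ}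
    (hv : ContinuousOn v (Icc a b)) (ha : 0 < v a)
    (hstep : ∀ z ∈ Ioc a b, (∀ t ∈ Ico a z, 0 < v t) → 0 < v z) :
    ∀ z ∈ Icc a b, 0 < v z := by
  by_contra! ⟨z, hz, hvz⟩
  set S := Icc a b ∩ v ⁻¹' Iic 0
  have hbdd : BddBelow S := ⟨a, fun t ht => ht.1.1⟩
  have hmem : sInf S ∈ S :=
    (hv.preimage_isClosed_of_isClosed isClosed_Icc isClosed_Iic).csInf_mem ⟨z, hz, hvz⟩ hbdd
  have hbefore : ∀ t ∈ Ico a (sInf S), 0 < v t := fun t ht =>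
    not_le.1 fun hvt => ht.2.not_ge (csInf_le hbdd ⟨⟨ht.1, ht.2.le.trans hmem.1.2⟩, hvt⟩)
  have hgt : a < sInf S := hmem.1.1.lt_of_ne fun h => (h ▸ ha).not_ge hmem.2
  exact (hstep _ ⟨hgt, hmem.1.2⟩ hbefore).not_ge hmem.2

/-- `Δ (f ∘ |·|) = radialLaplacian f ∘ |·|` for the Laplacian `Δ` on `ℝ²`. -/
noncomputable def radialLaplacian (f : ℝ → ℝ) (z : ℝ) : ℝ := deriv (deriv f) z + deriv f z / z

theorem hasDerivAt_mul_deriv {f : ℝ → ℝ} {z : ℝ} (hz : z ≠ 0)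
    (hf : DifferentiableAt ℝ (deriv f) z) :
    HasDerivAt (fun t => t * deriv f t) (z * radialLaplacian f z) z := by
  refine ((hasDerivAt_id' z).fun_mul hf.hasDerivAt).congr_deriv ?_
  simp only [radialLaplacian]
  field_simp
  ring

theorem hasDerivAt_mul_wronskian {p q : ℝ → ℝ} {z : ℝ} (hz : z ≠ 0)
    (hp : DifferentiableAt ℝ p z) (hp' : DifferentiableAt ℝ (deriv p) z)
    (hq : DifferentiableAt ℝ q z) (hq' : DifferentiableAt ℝ (deriv q) z) :
    HasDerivAt (fun t => t * (deriv p t * q t - p t * deriv q t))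
      (z * (radialLaplacian p z * q z - p z * radialLaplacian q z)) z := by
  have h := ((hasDerivAt_mul_deriv hz hp').fun_mul hq.hasDerivAt).fun_sub
    (hp.hasDerivAt.fun_mul (hasDerivAt_mul_deriv hz hq'))
  rw [show (fun t => t * (deriv p t * q t - p t * deriv q t)) =
    fun t => t * deriv p t * q t - p t * (t * deriv q t) from funext fun t => by ring]
  exact h.congr_deriv (by ring)

theorem le_of_deriv_mul_sub_mul_deriv_nonpos {p q : ℝ → ℝ} {a b L : ℝ} (hL : L ≠ 0)
    (hp : ∀ z ∈ Ioc a b, DifferentiableAt ℝ p z) (hq : ∀ z ∈ Ioc a b, DifferentiableAt ℝ q z)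
    (hq_pos : ∀ z ∈ Ioc a b, 0 < q z)
    (hW : ∀ z ∈ Ioc a b, deriv p z * q z - p z * deriv q z ≤ 0)
    (hpL : Tendsto p (𝓝[>] a) (𝓝 L)) (hqL : Tendsto q (𝓝[>] a) (𝓝 L)) :
    ∀ z ∈ Ioc a b, p z ≤ q z := by
  intro z hz
  have hratio := le_of_tendsto_nhdsGT_of_hasDerivAt_nonpos
    (fun t ht => (hp t ht).hasDerivAt.div (hq t ht).hasDerivAt (hq_pos t ht).ne')
    (fun t ht => div_nonpos_of_nonpos_of_nonneg (hW t ht) (sq_nonneg _))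
    (by simpa [div_self hL] using hpL.div hqL hL) z hz
  exact (div_le_one (hq_pos z hz)).1 hratio

theorem le_of_radialLaplacian_mul_le {p q : ℝ → ℝ} {Z L : ℝ} (hL : L ≠ 0)
    (hp : ∀ z ∈ Ioc 0 Z, DifferentiableAt ℝ p z)
    (hp' : ∀ z ∈ Ioc 0 Z, DifferentiableAt ℝ (deriv p) z)
    (hq : ∀ z ∈ Ioc 0 Z, DifferentiableAt ℝ q z)
    (hq' : ∀ z ∈ Ioc 0 Z, DifferentiableAt ℝ (deriv q) z)
    (hq_pos : ∀ z ∈ Ioc 0 Z, 0 < q z)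
    (hsource : ∀ z ∈ Ioc 0 Z, radialLaplacian p z * q z ≤ p z * radialLaplacian q z)
    (hpL : Tendsto p (𝓝[>] 0) (𝓝 L)) (hqL : Tendsto q (𝓝[>] 0) (𝓝 L))
    (hp_flux : Tendsto (fun z => z * deriv p z) (𝓝[>] 0) (𝓝 0))
    (hq_flux : Tendsto (fun z => z * deriv q z) (𝓝[>] 0) (𝓝 0)) :
    ∀ z ∈ Ioc 0 Z, p z ≤ q z := by
  have hW_lim : Tendsto (fun z => z * (deriv p z * q z - p z * deriv q z)) (𝓝[>] 0) (𝓝 0) := by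
    have := (hp_flux.mul hqL).sub (hpL.mul hq_flux)
    simp only [zero_mul, mul_zero, sub_zero] at this
    exact this.congr fun z => by ring
  have hW := le_of_tendsto_nhdsGT_of_hasDerivAt_nonpos
    (fun z hz => hasDerivAt_mul_wronskian hz.1.ne' (hp z hz) (hp' z hz) (hq z hz) (hq' z hz))
    (fun z hz => mul_nonpos_of_nonneg_of_nonpos hz.1.le (sub_nonpos.2 (hsource z hz))) hW_lim
  exact le_of_deriv_mul_sub_mul_deriv_nonpos hL hp hq hq_pos
    (fun z hz => nonpos_of_mul_nonpos_right (hW z hz) hz.1) hpL hqL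

theorem pos_of_radialLaplacian_eq_mul {v : ℝ → ℝ} {Z k : ℝ} (hk : 0 ≤ k)
    (hvc : ContinuousOn v (Icc 0 Z))
    (hv : ∀ z ∈ Ioc 0 Z, DifferentiableAt ℝ v z)
    (hv' : ∀ z ∈ Ioc 0 Z, DifferentiableAt ℝ (deriv v) z)
    (hv0 : 0 < v 0) (hflux : Tendsto (fun z => z * deriv v z) (𝓝[>] 0) (𝓝 0))
    (heq : ∀ z ∈ Ioc 0 Z, radialLaplacian v z = k * v z) :
    ∀ z ∈ Icc 0 Z, 0 < v z := by
  refine hvc.forall_Icc_pos_of_forall_Ico_pos hv0 fun z hz hpos => ?_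
  have hsub : Ioc 0 z ⊆ Ioc 0 Z := Ioc_subset_Ioc_right hz.2
  have hderiv : ∀ t ∈ Ioo 0 z, 0 ≤ deriv v t := fun t ht => by
    have hflux_nonneg := ge_of_tendsto_nhdsGT_of_hasDerivAt_nonneg (b := t)
      (fun s hs => hasDerivAt_mul_deriv hs.1.ne' (hv' s (hsub ⟨hs.1, hs.2.trans ht.2.le⟩)))
      (fun s hs => by
        rw [heq s (hsub ⟨hs.1, hs.2.trans ht.2.le⟩)]
        exact mul_nonneg hs.1.le (mul_nonneg hk (hpos s ⟨hs.1.le, hs.2.trans_lt ht.2⟩).le))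
      hflux t ⟨ht.1, le_rfl⟩
    exact nonneg_of_mul_nonneg_right hflux_nonneg ht.1
  have hmono : MonotoneOn v (Ioc 0 z) :=
    monotoneOn_of_deriv_nonneg (convex_Ioc 0 z)
      (fun t ht => (hv t (hsub ht)).continuousAt.continuousWithinAt)
      (fun t ht => (hv t (hsub (interior_subset ht))).differentiableWithinAt)
      (by simpa only [interior_Ioc] using hderiv)
  calc 0 < v (z / 2) := hpos _ ⟨(half_pos hz.1).le, half_lt_self hz.1⟩
    _ ≤ v z := hmono ⟨half_pos hz.1, half_le_self hz.1.le⟩ ⟨hz.1, le_rfl⟩ (half_le_self hz.1.le)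

theorem painleveIII_bessel_comparison_general (φ₀ φs Z : ℝ)
    (hφ₀ : 0 < φ₀) (hφ₀s : φ₀ ≤ φs) (hφs : φs < Real.pi) (hZ : 0 < Z)
    (C : ℝ) (hC : C = Real.sqrt (Real.sin φs / φs))
    (ψ u w : ℝ → ℝ)
    (hψc : ContinuousOn ψ (Set.Icc 0 Z))
    (huc : ContinuousOn u (Set.Icc 0 Z))
    (hwc : ContinuousOn w (Set.Icc 0 Z))
    (hψd1 : ∀ z ∈ Set.Ioc 0 Z, DifferentiableAt ℝ ψ z)
    (hψd2 : ∀ z ∈ Set.Ioc 0 Z, DifferentiableAt ℝ (deriv ψ) z)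
    (hud1 : ∀ z ∈ Set.Ioc 0 Z, DifferentiableAt ℝ u z)
    (hud2 : ∀ z ∈ Set.Ioc 0 Z, DifferentiableAt ℝ (deriv u) z)
    (hwd1 : ∀ z ∈ Set.Ioc 0 Z, DifferentiableAt ℝ w z)
    (hwd2 : ∀ z ∈ Set.Ioc 0 Z, DifferentiableAt ℝ (deriv w) z)
    (hψ0 : ψ 0 = φ₀) (hu0 : u 0 = φ₀) (hw0 : w 0 = φ₀)
    (hψlim : Filter.Tendsto (fun z => z * deriv ψ z)
      (nhdsWithin 0 (Set.Ioi 0)) (nhds 0))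
    (hulim : Filter.Tendsto (fun z => z * deriv u z)
      (nhdsWithin 0 (Set.Ioi 0)) (nhds 0))
    (hwlim : Filter.Tendsto (fun z => z * deriv w z)
      (nhdsWithin 0 (Set.Ioi 0)) (nhds 0))
    (hψeq : ∀ z ∈ Set.Ioc 0 Z, deriv (deriv ψ) z + deriv ψ z / z = Real.sin (ψ z))
    (hueq : ∀ z ∈ Set.Ioc 0 Z, deriv (deriv u) z + deriv u z / z = C ^ 2 * u z)
    (hweq : ∀ z ∈ Set.Ioc 0 Z, deriv (deriv w) z + deriv w z / z = w z)
    (hψrange : ∀ z ∈ Set.Icc 0 Z, 0 < ψ z ∧ ψ z ≤ φs) :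
    ∀ z ∈ Set.Icc 0 Z, u z ≤ ψ z ∧ ψ z ≤ w z := by
  have hφs_pos : 0 < φs := hφ₀.trans_le hφ₀s
  have hC2 : C ^ 2 = sin φs / φs := by
    rw [hC, sq_sqrt (div_nonneg (sin_nonneg_of_nonneg_of_le_pi hφs_pos.le hφs.le) hφs_pos.le)]
  have hu_pos := pos_of_radialLaplacian_eq_mul (sq_nonneg C) huc hud1 hud2 (hu0 ▸ hφ₀) hulim hueq
  have hw_pos := pos_of_radialLaplacian_eq_mul zero_le_one hwc hwd1 hwd2 (hw0 ▸ hφ₀) hwlim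
    fun z hz => (hweq z hz).trans (one_mul _).symm
  have hlim : ∀ f : ℝ → ℝ, ContinuousOn f (Icc 0 Z) → Tendsto f (𝓝[>] 0) (𝓝 (f 0)) :=
    fun f hf => ((hf 0 ⟨le_rfl, hZ.le⟩).mono_of_mem_nhdsWithin
      (mem_of_superset (Ioc_mem_nhdsGT hZ) Ioc_subset_Icc_self)).tendsto
  intro z hz
  rcases hz.1.eq_or_lt with rfl | hz0
  · simp [hψ0, hu0, hw0]
  constructor
  · refine le_of_radialLaplacian_mul_le hφ₀.ne' hud1 hud2 hψd1 hψd2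
      (fun t ht => (hψrange t (Ioc_subset_Icc_self ht)).1) (fun t ht => ?_)
      (hu0 ▸ hlim u huc) (hψ0 ▸ hlim ψ hψc) hulim hψlim z ⟨hz0, hz.2⟩
    obtain ⟨hψt_pos, hψt_le⟩ := hψrange t (Ioc_subset_Icc_self ht)
    have hsin : C ^ 2 * ψ t ≤ sin (ψ t) := calc
      C ^ 2 * ψ t = sin φs / φs * ψ t := by rw [hC2]
      _ ≤ sin (ψ t) / ψ t * ψ t := mul_le_mul_of_nonneg_right
        (antitoneOn_sin_div ⟨hψt_pos, hψt_le.trans hφs.le⟩ ⟨hφs_pos, hφs.le⟩ hψt_le) hψt_pos.le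
      _ = sin (ψ t) := div_mul_cancel₀ _ hψt_pos.ne'
    rw [show radialLaplacian u t = _ from hueq t ht, show radialLaplacian ψ t = _ from hψeq t ht]
    nlinarith [hu_pos t (Ioc_subset_Icc_self ht)]
  · refine le_of_radialLaplacian_mul_le hφ₀.ne' hψd1 hψd2 hwd1 hwd2
      (fun t ht => hw_pos t (Ioc_subset_Icc_self ht)) (fun t ht => ?_)
      (hψ0 ▸ hlim ψ hψc) (hw0 ▸ hlim w hwc) hψlim hwlim z ⟨hz0, hz.2⟩
    rw [show radialLaplacian ψ t = _ from hψeq t ht, show radialLaplacian w t = _ from hweq t ht]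
    exact mul_le_mul_of_nonneg_right (sin_le (hψrange t (Ioc_subset_Icc_self ht)).1.le)
      (hw_pos t (Ioc_subset_Icc_self ht)).le

/-- Bessel comparison for Painlevé III: with `C = √(sin φ*/φ*)`, if `ψ` solves
`ψ″ + ψ′/z = sin ψ`, `u` solves `u″ + u′/z = C²u` and `w` solves `w″ + w′/z = w`
on `(0,Z]`, all three continuous on `[0,Z]` with value `φ₀` at `0` and
`z·(derivative)(z) → 0` as `z → 0⁺`, and if `0 < ψ ≤ φ*` on `[0,Z]`,
then `u ≤ ψ ≤ w` on `[0,Z]`. -/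
theorem painleveIII_bessel_comparison (φ₀ φs Z : ℝ)
    (hφ₀ : 0 < φ₀) (hφ₀s : φ₀ ≤ φs) (hφs : φs < Real.pi) (hZ : 0 < Z)
    (C : ℝ) (hC : C = Real.sqrt (Real.sin φs / φs))
    (ψ u w : ℝ → ℝ)
    (hψc : ContinuousOn ψ (Set.Icc 0 Z))
    (huc : ContinuousOn u (Set.Icc 0 Z))
    (hwc : ContinuousOn w (Set.Icc 0 Z))
    (hψd1 : ∀ z ∈ Set.Ioc 0 Z, DifferentiableAt ℝ ψ z)
    (hψd2 : ∀ z ∈ Set.Ioc 0 Z, DifferentiableAt ℝ (deriv ψ) z)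
    (hψd2c : ContinuousOn (deriv (deriv ψ)) (Set.Ioc 0 Z))
    (hud1 : ∀ z ∈ Set.Ioc 0 Z, DifferentiableAt ℝ u z)
    (hud2 : ∀ z ∈ Set.Ioc 0 Z, DifferentiableAt ℝ (deriv u) z)
    (hud2c : ContinuousOn (deriv (deriv u)) (Set.Ioc 0 Z))
    (hwd1 : ∀ z ∈ Set.Ioc 0 Z, DifferentiableAt ℝ w z)
    (hwd2 : ∀ z ∈ Set.Ioc 0 Z, DifferentiableAt ℝ (deriv w) z)
    (hwd2c : ContinuousOn (deriv (deriv w)) (Set.Ioc 0 Z))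
    (hψ0 : ψ 0 = φ₀) (hu0 : u 0 = φ₀) (hw0 : w 0 = φ₀)
    (hψlim : Filter.Tendsto (fun z => z * deriv ψ z)
      (nhdsWithin 0 (Set.Ioi 0)) (nhds 0))
    (hulim : Filter.Tendsto (fun z => z * deriv u z)
      (nhdsWithin 0 (Set.Ioi 0)) (nhds 0))
    (hwlim : Filter.Tendsto (fun z => z * deriv w z)
      (nhdsWithin 0 (Set.Ioi 0)) (nhds 0))
    (hψeq : ∀ z ∈ Set.Ioc 0 Z, deriv (deriv ψ) z + deriv ψ z / z = Real.sin (ψ z))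
    (hueq : ∀ z ∈ Set.Ioc 0 Z, deriv (deriv u) z + deriv u z / z = C ^ 2 * u z)
    (hweq : ∀ z ∈ Set.Ioc 0 Z, deriv (deriv w) z + deriv w z / z = w z)
    (hψrange : ∀ z ∈ Set.Icc 0 Z, 0 < ψ z ∧ ψ z ≤ φs) :
    ∀ z ∈ Set.Icc 0 Z, u z ≤ ψ z ∧ ψ z ≤ w z :=
  painleveIII_bessel_comparison_general φ₀ φs Z hφ₀ hφ₀s hφs hZ C hC ψ u w hψc huc hwc hψd1 hψd2
    hud1 hud2 hwd1 hwd2 hψ0 hu0 hw0 hψlim hulim hwlim hψeq hueq hweq hψrange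
end

section
/- Let u₀ ≤ u₁ and v₀ ≤ v₁ be real numbers and let φ : [u₀,u₁] × [v₀,v₁] → ℝ be continuous with continuous partial derivative ∂_u φ and continuous mixed partial derivative ∂_v∂_u φ satisfying ∂_v∂_u φ(u,v) = sin(φ(u,v)) on the rectangle. If in addition 0 < φ(u,v) < π for all (u,v) in the closed rectangle, then ∫_{u₀}^{u₁} ∫_{v₀}^{v₁} sin(φ(u,v)) dv du < 2π. -/
/-! By the Hazzidakis formula, integrating `∂_v ∂_u φ = sin φ` over the rectangle gives the
alternating corner sum `φ(u₁,v₁) - φ(u₀,v₁) - φ(u₁,v₀) + φ(u₀,v₀)`; two of these angles enter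
positively, two negatively, and all lie in `(0, π)`, so the sum is less than `2π`. -/

open intervalIntegral Set MeasureTheory Function

section

variable {E : Type*} [NormedAddCommGroup E] [NormedSpace ℝ E] [CompleteSpace E]

theorem intervalIntegral.integral_eq_sub_of_hasDerivWithinAt_Icc {f f' : ℝ → E} {a b : ℝ}
    (hab : a ≤ b) (hf : ∀ x ∈ Icc a b, HasDerivWithinAt f (f' x) (Icc a b) x)
    (hf' : IntervalIntegrable f' volume a b) : ∫ x in a..b, f' x = f b - f a :=
  integral_eq_sub_of_hasDerivAt_of_le hab (fun x hx => (hf x hx).continuousWithinAt)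
    (fun x hx => (hf x (Ioo_subset_Icc_self hx)).hasDerivAt (Icc_mem_nhds hx.1 hx.2)) hf'

theorem integral_integral_eq_corner_sum_of_hasDerivWithinAt {u₀ u₁ v₀ v₁ : ℝ}
    (hu : u₀ ≤ u₁) (hv : v₀ ≤ v₁) {φ φu ψ : ℝ → ℝ → E}
    (hcu : ContinuousOn (uncurry φu) (Icc u₀ u₁ ×ˢ Icc v₀ v₁))
    (hd : ∀ u ∈ Icc u₀ u₁, ∀ v ∈ Icc v₀ v₁, HasDerivWithinAt (φ · v) (φu u v) (Icc u₀ u₁) u)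
    (hm : ∀ u ∈ Icc u₀ u₁, ∀ v ∈ Icc v₀ v₁, HasDerivWithinAt (φu u) (ψ u v) (Icc v₀ v₁) v)
    (hψ : ∀ u ∈ Icc u₀ u₁, IntervalIntegrable (ψ u) volume v₀ v₁) :
    ∫ u in u₀..u₁, ∫ v in v₀..v₁, ψ u v = φ u₁ v₁ - φ u₀ v₁ - (φ u₁ v₀ - φ u₀ v₀) := by
  have hv₀ : v₀ ∈ Icc v₀ v₁ := left_mem_Icc.2 hv
  have hv₁ : v₁ ∈ Icc v₀ v₁ := right_mem_Icc.2 hv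
  have hφu : ∀ v ∈ Icc v₀ v₁, IntervalIntegrable (φu · v) volume u₀ u₁ := fun v hv' =>
    (hcu.uncurry_right v hv').intervalIntegrable_of_Icc hu
  calc ∫ u in u₀..u₁, ∫ v in v₀..v₁, ψ u v = ∫ u in u₀..u₁, (φu u v₁ - φu u v₀) := by
        refine integral_congr fun u hu' => ?_
        rw [uIcc_of_le hu] at hu'
        exact integral_eq_sub_of_hasDerivWithinAt_Icc hv (hm u hu') (hψ u hu')
    _ = φ u₁ v₁ - φ u₀ v₁ - (φ u₁ v₀ - φ u₀ v₀) := by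
        rw [integral_sub (hφu v₁ hv₁) (hφu v₀ hv₀),
          integral_eq_sub_of_hasDerivWithinAt_Icc hu (fun u hu' => hd u hu' v₁ hv₁) (hφu v₁ hv₁),
          integral_eq_sub_of_hasDerivWithinAt_Icc hu (fun u hu' => hd u hu' v₀ hv₀) (hφu v₀ hv₀)]

end

/-- The area of an immersed asymptotic quadrilateral is less than `2π`: if `φ` on the
rectangle `[u₀,u₁] × [v₀,v₁]` is continuous with continuous partial derivative
`∂_u φ = φu`, continuous mixed partial `∂_v ∂_u φ = sin φ`, and `0 < φ < π` on the
rectangle, then `∫∫ sin φ < 2π`. -/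
theorem area_asymptotic_quadrilateral_lt_two_pi (u₀ u₁ v₀ v₁ : ℝ)
    (hu : u₀ ≤ u₁) (hv : v₀ ≤ v₁)
    (φ φu : ℝ → ℝ → ℝ)
    (hc : ContinuousOn (fun p : ℝ × ℝ => φ p.1 p.2) (Set.Icc u₀ u₁ ×ˢ Set.Icc v₀ v₁))
    (hcu : ContinuousOn (fun p : ℝ × ℝ => φu p.1 p.2) (Set.Icc u₀ u₁ ×ˢ Set.Icc v₀ v₁))
    (hd : ∀ u ∈ Set.Icc u₀ u₁, ∀ v ∈ Set.Icc v₀ v₁,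
      HasDerivWithinAt (fun t => φ t v) (φu u v) (Set.Icc u₀ u₁) u)
    (hm : ∀ u ∈ Set.Icc u₀ u₁, ∀ v ∈ Set.Icc v₀ v₁,
      HasDerivWithinAt (fun t => φu u t) (Real.sin (φ u v)) (Set.Icc v₀ v₁) v)
    (hrange : ∀ u ∈ Set.Icc u₀ u₁, ∀ v ∈ Set.Icc v₀ v₁,
      0 < φ u v ∧ φ u v < Real.pi) :
    (∫ u in u₀..u₁, ∫ v in v₀..v₁, Real.sin (φ u v)) < 2 * Real.pi := by
  have hsin : ∀ u ∈ Icc u₀ u₁, IntervalIntegrable (fun v => Real.sin (φ u v)) volume v₀ v₁ :=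
    fun u hu' =>
      (Real.continuous_sin.comp_continuousOn (hc.uncurry_left u hu')).intervalIntegrable_of_Icc hv
  rw [integral_integral_eq_corner_sum_of_hasDerivWithinAt hu hv hcu hd hm hsin]
  have h₁₁ := hrange u₁ (right_mem_Icc.2 hu) v₁ (right_mem_Icc.2 hv)
  have h₀₁ := hrange u₀ (left_mem_Icc.2 hu) v₁ (right_mem_Icc.2 hv)
  have h₁₀ := hrange u₁ (right_mem_Icc.2 hu) v₀ (left_mem_Icc.2 hv)
  have h₀₀ := hrange u₀ (left_mem_Icc.2 hu) v₀ (left_mem_Icc.2 hv)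
  linarith [h₁₁.2, h₀₁.1, h₁₀.1, h₀₀.2]
end

section
/- Let U ⊆ ℝ² be open and let N : U → ℝ³ be twice continuously differentiable with (∂_u∂_v N)(p) × N(p) = 0 for all p ∈ U (cross product in ℝ³). Then the two vector fields p ↦ ∂_u N(p) × N(p) and p ↦ −∂_v N(p) × N(p) satisfy ∂_v(∂_u N × N) = ∂_u(−∂_v N × N) = ∂_u N × ∂_v N on U. -/
/-- The cross product of two vectors in `ℝ³` (Euclidean space). -/
noncomputable def cross3 (x y : EuclideanSpace ℝ (Fin 3)) : EuclideanSpace ℝ (Fin 3) :=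
  WithLp.toLp 2 ![x 1 * y 2 - x 2 * y 1, x 2 * y 0 - x 0 * y 2, x 0 * y 1 - x 1 * y 0]

/-- Partial derivative in the first (`u`) variable. -/
noncomputable def pderivU (f : ℝ × ℝ → EuclideanSpace ℝ (Fin 3)) (p : ℝ × ℝ) :
    EuclideanSpace ℝ (Fin 3) :=
  deriv (fun t => f (t, p.2)) p.1

/-- Partial derivative in the second (`v`) variable. -/
noncomputable def pderivV (f : ℝ × ℝ → EuclideanSpace ℝ (Fin 3)) (p : ℝ × ℝ) :
    EuclideanSpace ℝ (Fin 3) :=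
  deriv (fun t => f (p.1, t)) p.2

/-! By the product rule, `∂_v(∂_u N × N) = ∂_v∂_u N × N + ∂_u N × ∂_v N` and, using
anticommutativity, `∂_u(-∂_v N × N) = -∂_u∂_v N × N + ∂_u N × ∂_v N`. For `N` of class `C²` both mixed
partials are the symmetric second derivative `D²N (1,0) (0,1)` (Schwarz), so the first terms are
the Lorentz harmonic condition and vanish. -/

open Topology

local notation "E³" => EuclideanSpace ℝ (Fin 3)

theorem neg_cross3 (x y : E³) : -cross3 x y = cross3 y x := by
  ext i
  fin_cases i <;> simp [cross3] <;> ring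

noncomputable def cross3CLM : E³ →L[ℝ] E³ →L[ℝ] E³ :=
  LinearMap.toContinuousLinearMap <| LinearMap.toContinuousLinearMap.toLinearMap ∘ₗ
    LinearMap.mk₂ ℝ cross3
      (fun _ _ _ => by ext i; fin_cases i <;> simp [cross3] <;> ring)
      (fun _ _ _ => by ext i; fin_cases i <;> simp [cross3] <;> ring)
      (fun _ _ _ => by ext i; fin_cases i <;> simp [cross3] <;> ring)
      (fun _ _ _ => by ext i; fin_cases i <;> simp [cross3] <;> ring)

theorem HasDerivAt.cross3 {f g : ℝ → E³} {f' g' : E³} {t : ℝ}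
    (hf : HasDerivAt f f' t) (hg : HasDerivAt g g' t) :
    HasDerivAt (fun s => _root_.cross3 (f s) (g s))
      (_root_.cross3 (f t) g' + _root_.cross3 f' (g t)) t :=
  cross3CLM.hasDerivAt_of_bilinear (fun _ => hf) (fun _ => hg)

section Slices

variable {F : Type*} [NormedAddCommGroup F] [NormedSpace ℝ F]
  {f : ℝ × ℝ → F} {f' : ℝ × ℝ →L[ℝ] F} {p : ℝ × ℝ}

theorem HasFDerivAt.hasDerivAt_fst_slice (h : HasFDerivAt f f' p) :
    HasDerivAt (fun t => f (t, p.2)) (f' (1, 0)) p.1 :=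
  h.comp_hasDerivAt p.1 ((hasDerivAt_id p.1).prodMk (hasDerivAt_const p.1 p.2))

theorem HasFDerivAt.hasDerivAt_snd_slice (h : HasFDerivAt f f' p) :
    HasDerivAt (fun t => f (p.1, t)) (f' (0, 1)) p.2 :=
  h.comp_hasDerivAt p.2 ((hasDerivAt_const p.2 p.1).prodMk (hasDerivAt_id p.2))

end Slices

section Partials

variable {N : ℝ × ℝ → E³} {U : Set (ℝ × ℝ)} {p : ℝ × ℝ}

theorem DifferentiableAt.hasDerivAt_pderivU (h : DifferentiableAt ℝ N p) :
    HasDerivAt (fun t => N (t, p.2)) (pderivU N p) p.1 :=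
  h.hasFDerivAt.hasDerivAt_fst_slice.differentiableAt.hasDerivAt

theorem DifferentiableAt.hasDerivAt_pderivV (h : DifferentiableAt ℝ N p) :
    HasDerivAt (fun t => N (p.1, t)) (pderivV N p) p.2 :=
  h.hasFDerivAt.hasDerivAt_snd_slice.differentiableAt.hasDerivAt

theorem DifferentiableOn.pderivU_eventuallyEq (hN : DifferentiableOn ℝ N U) (hU : IsOpen U)
    (hp : p ∈ U) : pderivU N =ᶠ[𝓝 p] fun q => fderiv ℝ N q (1, 0) := by
  filter_upwards [hU.mem_nhds hp] with q hq
  exact ((hN q hq).differentiableAt (hU.mem_nhds hq)).hasFDerivAt.hasDerivAt_fst_slice.deriv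

theorem DifferentiableOn.pderivV_eventuallyEq (hN : DifferentiableOn ℝ N U) (hU : IsOpen U)
    (hp : p ∈ U) : pderivV N =ᶠ[𝓝 p] fun q => fderiv ℝ N q (0, 1) := by
  filter_upwards [hU.mem_nhds hp] with q hq
  exact ((hN q hq).differentiableAt (hU.mem_nhds hq)).hasFDerivAt.hasDerivAt_snd_slice.deriv

theorem ContDiffOn.hasFDerivAt_fderiv (hN : ContDiffOn ℝ 2 N U) (hU : IsOpen U) (hp : p ∈ U) :
    HasFDerivAt (fderiv ℝ N) (fderiv ℝ (fderiv ℝ N) p) p :=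
  (((hN.fderiv_of_isOpen hU le_rfl).contDiffAt (hU.mem_nhds hp)).differentiableAt
    one_ne_zero).hasFDerivAt

theorem ContDiffOn.hasDerivAt_pderivU_snd_slice (hN : ContDiffOn ℝ 2 N U) (hU : IsOpen U)
    (hp : p ∈ U) :
    HasDerivAt (fun t => pderivU N (p.1, t)) (fderiv ℝ (fderiv ℝ N) p (0, 1) (1, 0)) p.2 :=
  ((ContinuousLinearMap.apply ℝ E³ ((1, 0) : ℝ × ℝ)).hasFDerivAt.comp p
    (hN.hasFDerivAt_fderiv hU hp)).hasDerivAt_snd_slice.congr_of_eventuallyEq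
    (((hN.differentiableOn two_ne_zero).pderivU_eventuallyEq hU hp).comp_tendsto
      ((Continuous.prodMk_right p.1).tendsto' _ _ rfl))

theorem ContDiffOn.hasDerivAt_pderivV_fst_slice (hN : ContDiffOn ℝ 2 N U) (hU : IsOpen U)
    (hp : p ∈ U) :
    HasDerivAt (fun t => pderivV N (t, p.2)) (fderiv ℝ (fderiv ℝ N) p (1, 0) (0, 1)) p.1 :=
  ((ContinuousLinearMap.apply ℝ E³ ((0, 1) : ℝ × ℝ)).hasFDerivAt.comp p
    (hN.hasFDerivAt_fderiv hU hp)).hasDerivAt_fst_slice.congr_of_eventuallyEq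
    (((hN.differentiableOn two_ne_zero).pderivV_eventuallyEq hU hp).comp_tendsto
      ((Continuous.prodMk_left p.2).tendsto' _ _ rfl))

end Partials

/-- Compatibility of the Lelieuvre formulae: if `N` is C² on an open set `U ⊆ ℝ²` and
Lorentz harmonic, i.e. `(∂_u∂_v N) × N = 0` on `U`, then the two Lelieuvre vector fields
`∂_u N × N` and `−∂_v N × N` satisfy
`∂_v(∂_u N × N) = ∂_u(−∂_v N × N) = ∂_u N × ∂_v N` on `U`. -/
theorem lelieuvre_compatibility (U : Set (ℝ × ℝ)) (hU : IsOpen U)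
    (N : ℝ × ℝ → EuclideanSpace ℝ (Fin 3))
    (hN : ContDiffOn ℝ 2 N U)
    (hharm : ∀ p ∈ U, cross3 (pderivU (fun q => pderivV N q) p) (N p) = 0) :
    ∀ p ∈ U,
      pderivV (fun q => cross3 (pderivU N q) (N q)) p =
        cross3 (pderivU N p) (pderivV N p) ∧
      pderivU (fun q => -cross3 (pderivV N q) (N q)) p =
        cross3 (pderivU N p) (pderivV N p) := by
  intro p hp
  have hNp : ContDiffAt ℝ 2 N p := hN.contDiffAt (hU.mem_nhds hp)
  set D2 := fderiv ℝ (fderiv ℝ N) p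
  have hmixed : cross3 (D2 (1, 0) (0, 1)) (N p) = 0 :=
    (hN.hasDerivAt_pderivV_fst_slice hU hp).deriv ▸ hharm p hp
  have hsymm : D2 (0, 1) (1, 0) = D2 (1, 0) (0, 1) := hNp.isSymmSndFDerivAt (by simp) _ _
  have hNdiff : DifferentiableAt ℝ N p := hNp.differentiableAt two_ne_zero
  constructor
  · rw [pderivV, ((hN.hasDerivAt_pderivU_snd_slice hU hp).cross3 hNdiff.hasDerivAt_pderivV).deriv,
      hsymm, hmixed, add_zero]
  · rw [pderivU, ((hN.hasDerivAt_pderivV_fst_slice hU hp).cross3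
      hNdiff.hasDerivAt_pderivU).fun_neg.deriv, hmixed, add_zero, neg_cross3]
end

section
/- Let N₀, N₁, N₂, N₁₂ ∈ ℝ³ be unit vectors with ⟨N₀, N₁⟩ = ⟨N₀, N₂⟩ = ⟨N₁₂, N₁⟩ = ⟨N₁₂, N₂⟩, and suppose N₀ − N₁₂ and N₁ − N₂ are linearly independent. Then (N₁ + N₂) × (N₀ + N₁₂) = 0 (cross product in ℝ³), i.e. N₁ + N₂ and N₀ + N₁₂ are parallel. -/
/-!
Both diagonal differences `N₀ - N₁₂` and `N₁ - N₂` are orthogonal to both diagonal sums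
`N₁ + N₂` and `N₀ + N₁₂`: equal norms give `⟪x - y, x + y⟫ = 0`, and the four equal inner
products give the two mixed ones. So both sums lie in the orthogonal complement of a plane
in `ℝ³`, which is a line.
-/

open scoped RealInnerProductSpace

open Module Submodule

theorem LinearIndependent.finrank_span_pair {K V : Type*} [DivisionRing K] [AddCommGroup V]
    [Module K V] {x y : V} (h : LinearIndependent K ![x, y]) :
    finrank K (span K {x, y}) = 2 := by
  rw [← Matrix.range_cons_cons_empty x y ![], finrank_span_eq_card h, Fintype.card_fin]

section InnerProductSpace

variable {𝕜 E : Type*} [RCLike 𝕜] [NormedAddCommGroup E] [InnerProductSpace 𝕜 E]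

open scoped InnerProductSpace

theorem Submodule.mem_orthogonal_span_pair {u v x : E} (hu : ⟪u, x⟫_𝕜 = 0)
    (hv : ⟪v, x⟫_𝕜 = 0) : x ∈ (span 𝕜 {u, v})ᗮ := by
  rw [mem_orthogonal]
  intro w hw
  obtain ⟨s, t, rfl⟩ := mem_span_pair.mp hw
  simp [inner_add_left, inner_smul_left, hu, hv]

theorem Submodule.not_linearIndependent_pair_of_mem_orthogonal [FiniteDimensional 𝕜 E]
    {K : Submodule 𝕜 E} (hK : finrank 𝕜 K + 1 = finrank 𝕜 E) {a b : E} (ha : a ∈ Kᗮ)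
    (hb : b ∈ Kᗮ) : ¬ LinearIndependent 𝕜 ![a, b] := by
  intro hab
  have hle : span 𝕜 {a, b} ≤ Kᗮ :=
    span_le.mpr (Set.insert_subset ha (Set.singleton_subset_iff.mpr hb))
  have hrank_le := finrank_mono hle
  have hrank_sum := K.finrank_add_finrank_orthogonal
  rw [hab.finrank_span_pair] at hrank_le
  omega

end InnerProductSpace

theorem cross3_eq_crossProduct (x y : EuclideanSpace ℝ (Fin 3)) :
    cross3 x y = WithLp.toLp 2 (crossProduct (WithLp.ofLp x) (WithLp.ofLp y)) :=
  rfl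

theorem cross3_eq_zero_iff {x y : EuclideanSpace ℝ (Fin 3)} :
    cross3 x y = 0 ↔ ¬ LinearIndependent ℝ ![x, y] := by
  have hcomp : ![WithLp.ofLp x, WithLp.ofLp y] =
      (WithLp.linearEquiv 2 ℝ (Fin 3 → ℝ)).toLinearMap ∘ ![x, y] := by
    ext i : 1
    fin_cases i <;> rfl
  rw [cross3_eq_crossProduct, WithLp.toLp_eq_zero, ← not_ne_iff,
    crossProduct_ne_zero_iff_linearIndependent, hcomp,
    LinearMap.linearIndependent_iff _ (LinearEquiv.ker _)]

/-- Discrete Lorentz-harmonic (Moutard) condition on a quad of a spherical Chebyshev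
net: if `N₀, N₁, N₂, N₁₂` are unit vectors with all four inner products between adjacent
normals equal, and `N₀ − N₁₂` and `N₁ − N₂` are linearly independent, then
`(N₁ + N₂) × (N₀ + N₁₂) = 0`, i.e. `N₁ + N₂` and `N₀ + N₁₂` are parallel. -/
theorem chebyshev_quad_moutard
    (N₀ N₁ N₂ N₁₂ : EuclideanSpace ℝ (Fin 3))
    (h₀ : ‖N₀‖ = 1) (h₁ : ‖N₁‖ = 1) (h₂ : ‖N₂‖ = 1) (h₁₂ : ‖N₁₂‖ = 1)
    (ha : ⟪N₀, N₁⟫ = ⟪N₀, N₂⟫) (hb : ⟪N₀, N₂⟫ = ⟪N₁₂, N₁⟫) (hc : ⟪N₁₂, N₁⟫ = ⟪N₁₂, N₂⟫)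
    (hli : LinearIndependent ℝ ![N₀ - N₁₂, N₁ - N₂]) :
    cross3 (N₁ + N₂) (N₀ + N₁₂) = 0 := by
  have hua : ⟪N₀ - N₁₂, N₁ + N₂⟫ = 0 := by
    simp only [inner_sub_left, inner_add_right]
    linarith
  have hva : ⟪N₁ - N₂, N₁ + N₂⟫ = 0 := by
    rw [real_inner_comm, real_inner_add_sub_eq_zero_iff, h₁, h₂]
  have hub : ⟪N₀ - N₁₂, N₀ + N₁₂⟫ = 0 := by
    rw [real_inner_comm, real_inner_add_sub_eq_zero_iff, h₀, h₁₂]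
  have hvb : ⟪N₁ - N₂, N₀ + N₁₂⟫ = 0 := by
    rw [real_inner_comm]
    simp only [inner_add_left, inner_sub_right]
    linarith
  rw [cross3_eq_zero_iff]
  refine not_linearIndependent_pair_of_mem_orthogonal ?_ (mem_orthogonal_span_pair hua hva)
    (mem_orthogonal_span_pair hub hvb)
  rw [hli.finrank_span_pair, finrank_euclideanSpace_fin]
end

section
/- Let N : ℤ × ℤ → ℝ³ satisfy (N(i+1,j) + N(i,j+1)) × (N(i,j) + N(i+1,j+1)) = 0 for all (i,j) ∈ ℤ × ℤ (cross product in ℝ³). Then there exists a map r : ℤ × ℤ → ℝ³ such that r(i+1,j) − r(i,j) = N(i+1,j) × N(i,j) and r(i,j+1) − r(i,j) = −N(i,j+1) × N(i,j) for all (i,j) ∈ ℤ × ℤ. -/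
open Finset in
theorem exists_antidifference {V : Type*} [AddCommGroup V] (u : ℤ → V) :
    ∃ U : ℤ → V, U 0 = 0 ∧ ∀ n, U (n + 1) - U n = u n := by
  refine ⟨fun n => ∑ k ∈ range n.toNat, u k - ∑ k ∈ range (-n).toNat, u (-(k + 1)),
    by simp, fun n => ?_⟩
  have hneg (m : ℕ) : (-1 + -(m : ℤ)).toNat = 0 := by omega
  obtain ⟨m, rfl | rfl⟩ := Int.eq_nat_or_neg n
  · simp [hneg, sum_range_succ]
  · cases m <;> simp [hneg, sum_range_succ]

theorem exists_discrete_potential {V : Type*} [AddCommGroup V] (f g : ℤ × ℤ → V)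
    (hclosed : ∀ i j, f (i, j + 1) - f (i, j) = g (i + 1, j) - g (i, j)) :
    ∃ r : ℤ × ℤ → V, (∀ i j, r (i + 1, j) - r (i, j) = f (i, j)) ∧
      ∀ i j, r (i, j + 1) - r (i, j) = g (i, j) := by
  obtain ⟨F, -, hF⟩ := exists_antidifference fun i => f (i, 0)
  choose G hG0 hG using fun i => exists_antidifference fun j => g (i, j)
  refine ⟨fun p => F p.1 + G p.1 p.2, fun i j => ?_, fun i j => by simp [hG]⟩
  have hper : Function.Periodic (fun j => G (i + 1) j - G i j - f (i, j)) 1 := fun j => by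
    linear_combination (norm := module) hG (i + 1) j - hG i j - hclosed i j
  have hconst := hper.int_mul j 0
  simp only [zero_add, mul_one, hG0, sub_zero] at hconst
  linear_combination (norm := module) hF i + hconst

theorem lelieuvre_closed_of_moutard {a b c d : EuclideanSpace ℝ (Fin 3)}
    (h : cross3 (b + c) (a + d) = 0) :
    cross3 d c - cross3 b a = -cross3 d b - -cross3 c a := by
  rw [← sub_eq_zero, ← neg_eq_zero.mpr h]
  ext k
  fin_cases k <;>
    simp only [cross3, Fin.zero_eta, Fin.mk_one, Fin.reduceFinMk, PiLp.add_apply, PiLp.sub_apply,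
      PiLp.neg_apply, Matrix.cons_val_zero, Matrix.cons_val_one, Matrix.cons_val] <;>
    ring

/-- Integrability of the discrete Lelieuvre equations: if `N : ℤ × ℤ → ℝ³` satisfies the
discrete Moutard (Lorentz-harmonic) condition `(N(i+1,j) + N(i,j+1)) × (N(i,j) + N(i+1,j+1)) = 0`
on every elementary quad, then there is a discrete K-surface `r : ℤ × ℤ → ℝ³` with
`r(i+1,j) − r(i,j) = N(i+1,j) × N(i,j)` and `r(i,j+1) − r(i,j) = −N(i,j+1) × N(i,j)`. -/
theorem discrete_lelieuvre_integrable
    (N : ℤ × ℤ → EuclideanSpace ℝ (Fin 3))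
    (hmoutard : ∀ i j : ℤ,
      cross3 (N (i + 1, j) + N (i, j + 1)) (N (i, j) + N (i + 1, j + 1)) = 0) :
    ∃ r : ℤ × ℤ → EuclideanSpace ℝ (Fin 3),
      (∀ i j : ℤ, r (i + 1, j) - r (i, j) = cross3 (N (i + 1, j)) (N (i, j))) ∧
      (∀ i j : ℤ, r (i, j + 1) - r (i, j) = -cross3 (N (i, j + 1)) (N (i, j))) :=
  exists_discrete_potential (fun p => cross3 (N (p.1 + 1, p.2)) (N p))
    (fun p => -cross3 (N (p.1, p.2 + 1)) (N p))
    fun i j => lelieuvre_closed_of_moutard (hmoutard i j)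
end

section
/- Let δ ∈ ℝ and let N : ℕ × ℕ → ℝ³ satisfy: ‖N(i,j)‖ = 1 for all (i,j); ⟨N(i,0), N(i+1,0)⟩ = cos δ for all i and ⟨N(0,j), N(0,j+1)⟩ = cos δ for all j; and for all (i,j), N(i+1,j) + N(i,j+1) ≠ 0 and N(i+1,j+1) = (2⟨N(i+1,j) + N(i,j+1), N(i,j)⟩/‖N(i+1,j) + N(i,j+1)‖²)·(N(i+1,j) + N(i,j+1)) − N(i,j). Then ⟨N(i,j), N(i+1,j)⟩ = cos δ and ⟨N(i,j), N(i,j+1)⟩ = cos δ for all (i,j) ∈ ℕ × ℕ. -/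
/-!
The Householder step `N₁₂ = (2⟪s, N⟫ / ‖s‖²) • s - N` with `s = N₁ + N₂` is the reflection of `N`
in the line `ℝ ∙ s`. Since `N₁` and `N₂` have the same length, this reflection swaps them; being an
isometry it therefore carries the angle between `N` and `N₁` to the opposite edge `N₂ N₁₂`, and
likewise the angle between `N` and `N₂` to `N₁ N₁₂`. So each angle is constant along the lines of
the net and equals its boundary value `δ`.
-/

open scoped RealInnerProductSpace

namespace Submodule

variable {F : Type*} [NormedAddCommGroup F] [InnerProductSpace ℝ F]

theorem reflection_span_singleton_apply (s a : F) :
    reflection (ℝ ∙ s) a = (2 * ⟪s, a⟫ / ‖s‖ ^ 2) • s - a := by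
  rw [reflection_singleton_apply, ← Nat.cast_smul_eq_nsmul ℝ, smul_smul, Nat.cast_ofNat,
    RCLike.ofReal_real_eq_id, id, mul_div_assoc]

theorem reflection_span_add_of_norm_eq {b c : F} (h : ‖b‖ = ‖c‖) :
    reflection (ℝ ∙ (b + c)) b = c := by
  have := reflection_sub (v := b) (w := -c) (by rw [norm_neg, h])
  rwa [sub_neg_eq_add, reflection_orthogonal_apply, neg_inj] at this

theorem inner_reflection_span_add_of_norm_eq {b c : F} (h : ‖b‖ = ‖c‖) (a : F) :
    ⟪c, reflection (ℝ ∙ (b + c)) a⟫ = ⟪a, b⟫ := by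
  rw [real_inner_comm, ← (reflection (ℝ ∙ (b + c))).inner_map_map a b,
    reflection_span_add_of_norm_eq h]

end Submodule

open Submodule in
theorem goursat_householder_chebyshev_general (δ : ℝ)
    (N : ℕ × ℕ → EuclideanSpace ℝ (Fin 3))
    (hunit : ∀ p : ℕ × ℕ, ‖N p‖ = 1)
    (hu0 : ∀ i : ℕ, ⟪N (i, 0), N (i + 1, 0)⟫ = Real.cos δ)
    (hv0 : ∀ j : ℕ, ⟪N (0, j), N (0, j + 1)⟫ = Real.cos δ)
    (hhh : ∀ i j : ℕ, N (i + 1, j + 1) =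
      (2 * ⟪N (i + 1, j) + N (i, j + 1), N (i, j)⟫ /
        ‖N (i + 1, j) + N (i, j + 1)‖ ^ 2) • (N (i + 1, j) + N (i, j + 1)) - N (i, j)) :
    ∀ i j : ℕ, ⟪N (i, j), N (i + 1, j)⟫ = Real.cos δ ∧
      ⟪N (i, j), N (i, j + 1)⟫ = Real.cos δ := by
  have hstep : ∀ i j : ℕ,
      ⟪N (i, j + 1), N (i + 1, j + 1)⟫ = ⟪N (i, j), N (i + 1, j)⟫ ∧
      ⟪N (i + 1, j), N (i + 1, j + 1)⟫ = ⟪N (i, j), N (i, j + 1)⟫ := by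
    intro i j
    have hnorm : ‖N (i + 1, j)‖ = ‖N (i, j + 1)‖ := by rw [hunit, hunit]
    have hN : N (i + 1, j + 1) = reflection (ℝ ∙ (N (i + 1, j) + N (i, j + 1))) (N (i, j)) := by
      rw [hhh i j, reflection_span_singleton_apply]
    rw [hN]
    refine ⟨inner_reflection_span_add_of_norm_eq hnorm _, ?_⟩
    rw [add_comm (N (i + 1, j))]
    exact inner_reflection_span_add_of_norm_eq hnorm.symm _
  intro i j
  constructor
  · induction j with
    | zero => exact hu0 i
    | succ j ih => rw [(hstep i j).1, ih]
  · induction i with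
    | zero => exact hv0 j
    | succ i ih => rw [(hstep i j).2, ih]

/-- Householder propagation of the Chebyshev property: if the boundary normals along the
two axes have constant consecutive angle `δ` and each fourth vertex is obtained from the
other three by the Householder reflection, then every edge of the resulting spherical net
subtends the angle `δ`. -/
theorem goursat_householder_chebyshev (δ : ℝ)
    (N : ℕ × ℕ → EuclideanSpace ℝ (Fin 3))
    (hunit : ∀ p : ℕ × ℕ, ‖N p‖ = 1)
    (hu0 : ∀ i : ℕ, ⟪N (i, 0), N (i + 1, 0)⟫ = Real.cos δ)
    (hv0 : ∀ j : ℕ, ⟪N (0, j), N (0, j + 1)⟫ = Real.cos δ)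
    (hne : ∀ i j : ℕ, N (i + 1, j) + N (i, j + 1) ≠ 0)
    (hhh : ∀ i j : ℕ, N (i + 1, j + 1) =
      (2 * ⟪N (i + 1, j) + N (i, j + 1), N (i, j)⟫ /
        ‖N (i + 1, j) + N (i, j + 1)‖ ^ 2) • (N (i + 1, j) + N (i, j + 1)) - N (i, j)) :
    ∀ i j : ℕ, ⟪N (i, j), N (i + 1, j)⟫ = Real.cos δ ∧
      ⟪N (i, j), N (i, j + 1)⟫ = Real.cos δ :=
  goursat_householder_chebyshev_general δ N hunit hu0 hv0 hhh
end
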